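/- Let T = cS, where c ∈ (Σ ∪ Π)∖{$} and S is a p-string of length n ≥ 1 ending with $, with $ occurring nowhere else in S, and let k_T = RA_T⁻¹[n+1]. Then LCP∞_T[i] = LCP∞_S[i] for all i < k_T − 1, and LCP∞_T[i] = LCP∞_S[i−1] for all i > k_T. -/

import Mathlib

/-! Common framework: parameterized strings over static alphabet `σ` and
parameter alphabet `π`.  A p-string is a `List (σ ⊕ π)`. -/

variable {σ π : Type*}

instance instInhabSum [Inhabited σ] : Inhabited (σ ⊕ π) := ⟨Sum.inl default⟩

/-- one right rotation: the last character moves to the front -/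
def rotR1 {α : Type*} (W : List α) : List α := W.rotate (W.length - 1)

/-- `rotR W i` is the `i`-th right rotation `Rot(W, i)` -/
def rotR {α : Type*} (W : List α) : ℕ → List α
  | 0 => W
  | i + 1 => rotR1 (rotR W i)

/-- 1-based access `W[i]` (junk default outside the range) -/
def get1 {α : Type*} [Inhabited α] (W : List α) (i : ℕ) : α := W.getD (i - 1) default

/-- the prev-encoding `⟨T⟩`, a list over `σ ⊕ ℕ∞` -/
def prevEnc [DecidableEq σ] [DecidableEq π] (T : List (σ ⊕ π)) : List (σ ⊕ ℕ∞) :=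
  (List.range T.length).map fun k =>
    match T[k]? with
    | none => Sum.inr ⊤
    | some (Sum.inl a) => Sum.inl a
    | some (Sum.inr b) =>
      match ((List.range k).filter fun j => T[j]? = some (Sum.inr b)).max? with
      | none => Sum.inr ⊤
      | some j => Sum.inr ((k - j : ℕ) : ℕ∞)

/-- number of distinct parameter characters occurring in `W` -/
def distinctParams [DecidableEq π] (W : List (σ ⊕ π)) : ℕ :=
  (W.filterMap Sum.getRight?).dedup.length

/-- the encoding `⟦T⟧`, a list over `σ ⊕ ℕ`:  a static character is kept; a
parameter character at (1-based) position `i` is replaced by the number of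
distinct parameter characters in `Rot(T, n-i)[1:ℓ]` where `ℓ` is the leftmost
occurrence position of `T[i]` in `Rot(T, n-i)`. -/
def encodeE [DecidableEq σ] [DecidableEq π] (T : List (σ ⊕ π)) : List (σ ⊕ ℕ) :=
  (List.range T.length).map fun k =>
    match T[k]? with
    | none => Sum.inr 0
    | some (Sum.inl a) => Sum.inl a
    | some (Sum.inr b) =>
      let R := rotR T (T.length - (k + 1))
      Sum.inr (distinctParams (R.take (R.idxOf (Sum.inr b) + 1)))

/-- order on prev-encoding characters: every static character is smaller than
every element of `ℕ∞` (and `ℕ∞` carries its usual order with `∞` on top) -/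
def pvlt [LT σ] : (σ ⊕ ℕ∞) → (σ ⊕ ℕ∞) → Prop
  | Sum.inl a, Sum.inl b => a < b
  | Sum.inl _, Sum.inr _ => True
  | Sum.inr _, Sum.inl _ => False
  | Sum.inr x, Sum.inr y => x < y

/-- `T` is a p-string of length ≥ 1 ending with the static character `d`,
which occurs nowhere else in `T`. -/
def EndsWith [DecidableEq σ] [DecidableEq π] (T : List (σ ⊕ π)) (d : σ) : Prop :=
  1 ≤ T.length ∧ T.getLast? = some (Sum.inl d) ∧ T.count (Sum.inl d) = 1

/-- `RA` represents the parameterized rotation array `RA_T` (0-based indices: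
`RA_T[i] = (RA ⟨i-1⟩).val + 1`): the prev-encodings of the rotations are listed
in strictly increasing lexicographic order. -/
def IsRA [LinearOrder σ] [DecidableEq π] (T : List (σ ⊕ π))
    (RA : Fin T.length ≃ Fin T.length) : Prop :=
  ∀ i j : Fin T.length, i < j →
    List.Lex pvlt (prevEnc (rotR T ((RA i).val + 1))) (prevEnc (rotR T ((RA j).val + 1)))

/-- `LF` represents the LF mapping: `LF_T(i) = j` iff `T_{RA_T[i]+1} = T_{RA_T[j]}`. -/
def IsLF [LinearOrder σ] [DecidableEq π] (T : List (σ ⊕ π))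
    (RA LF : Fin T.length ≃ Fin T.length) : Prop :=
  ∀ i : Fin T.length, rotR T ((RA i).val + 2) = rotR T ((RA (LF i)).val + 1)

/-- the pBWT array `L_T[i] = ⟦T_{RA_T[i]}⟧[n]` -/
def Larr [LinearOrder σ] [DecidableEq π] [Inhabited σ] (T : List (σ ⊕ π))
    (RA : Fin T.length ≃ Fin T.length) (i : Fin T.length) : σ ⊕ ℕ :=
  get1 (encodeE (rotR T ((RA i).val + 1))) T.length

/-- the array `F_T[i] = ⟦T_{RA_T[i]}⟧[1]` -/
def Farr [LinearOrder σ] [DecidableEq π] [Inhabited σ] (T : List (σ ⊕ π))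
    (RA : Fin T.length ≃ Fin T.length) (i : Fin T.length) : σ ⊕ ℕ :=
  get1 (encodeE (rotR T ((RA i).val + 1))) 1

/-- longest common prefix of two lists -/
def lcp {α : Type*} [DecidableEq α] : List α → List α → List α
  | a :: as, b :: bs => if a = b then a :: lcp as bs else []
  | _, _ => []

/-- `lcp∞(X, Y)`: the number of `∞`'s in the longest common prefix of `X` and `Y` -/
def lcpInf [DecidableEq σ] (X Y : List (σ ⊕ ℕ∞)) : ℕ :=
  (lcp X Y).count (Sum.inr ⊤)

/-- the `∞`-LCP array (1-based): `LCP∞_T[i] = lcp∞(⟨T_{RA_T[i]}⟩, ⟨T_{RA_T[i+1]}⟩)`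
for `1 ≤ i < n`, and `0` otherwise. -/
def LCPa [LinearOrder σ] [DecidableEq π] (T : List (σ ⊕ π))
    (RA : Fin T.length ≃ Fin T.length) (i : ℕ) : ℕ :=
  if h : 1 ≤ i ∧ i < T.length then
    lcpInf (prevEnc (rotR T ((RA ⟨i - 1, by omega⟩).val + 1)))
           (prevEnc (rotR T ((RA ⟨i, h.2⟩).val + 1)))
  else 0

/-- parameterized match: a bijection on `σ ⊕ π` fixing all static characters
renames `S` into `T` -/
def PMatch (S T : List (σ ⊕ π)) : Prop :=
  ∃ f : (σ ⊕ π) ≃ (σ ⊕ π), (∀ a : σ, f (Sum.inl a) = Sum.inl a) ∧ S.map f = T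

/-- leftmost (1-based) occurrence position of `c` in `W`, `0` if absent -/
def leftPos [DecidableEq σ] [DecidableEq π] (W : List (σ ⊕ π)) (c : σ ⊕ π) : ℕ :=
  if W.contains c then W.idxOf c + 1 else 0

/-- rightmost (1-based) occurrence position of `c` in `W`, `0` if absent -/
def rightPos [DecidableEq σ] [DecidableEq π] (W : List (σ ⊕ π)) (c : σ ⊕ π) : ℕ :=
  if W.contains c then W.length - W.reverse.idxOf c else 0


/-! Since `$` occurs exactly once, at the end, for `1 ≤ p < q ≤ |W|` the prev-encodings of
`Rot(W, p)` and `Rot(W, q)` already differ at position `p`: the former has `$` there, the latter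
does not. Hence their order and their `lcp∞` only depend on the prefixes of length `min p q`.
For `p ≤ |S|`, `Rot(cS, p)` and `Rot(S, p)` share their first `p` characters, and the
prev-encoding of a prefix is a prefix of the prev-encoding. So the rotations `1, …, n` of `T = cS`
are sorted, and have pairwise `lcp∞`, exactly as those of `S`: the rotation array of `T` is that
of `S` with `T = Rot(T, n + 1)` inserted at rank `k_T`, i.e. `RA_T ∘ succAbove k_T = RA_S`. -/
section Prefix
variable {α : Type*}

theorem lcp_eq_lcp_take [DecidableEq α] :
    ∀ {X Y : List α} {k m : ℕ}, k < m → X[k]? ≠ Y[k]? → lcp X Y = lcp (X.take m) (Y.take m)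
  | _, _, _, 0, hk, _ => absurd hk (Nat.not_lt_zero _)
  | [], Y, _, _ + 1, _, _ => by cases Y <;> simp [lcp]
  | _ :: _, [], _, _ + 1, _, _ => by simp [lcp]
  | a :: X, b :: Y, 0, _ + 1, _, hne => by simp_all [lcp]
  | a :: X, b :: Y, k + 1, m + 1, hk, hne => by
    simp only [List.take_succ_cons, lcp]
    rw [lcp_eq_lcp_take (k := k) (m := m) (by omega) (by simpa using hne)]

theorem lex_iff_lex_take {r : α → α → Prop} :
    ∀ {X Y : List α} {k m : ℕ}, k < m → X[k]? ≠ Y[k]? →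
      (List.Lex r X Y ↔ List.Lex r (X.take m) (Y.take m))
  | _, _, _, 0, hk, _ => absurd hk (Nat.not_lt_zero _)
  | [], Y, _, _ + 1, _, hne => by cases Y <;> simp_all
  | _ :: _, [], _, _ + 1, _, _ => by simp [List.not_lex_nil]
  | a :: X, b :: Y, 0, _ + 1, _, hne => by simp_all [List.cons_lex_cons_iff]
  | a :: X, b :: Y, k + 1, m + 1, hk, hne => by
    simp only [List.take_succ_cons, List.cons_lex_cons_iff]
    rw [lex_iff_lex_take (k := k) (m := m) (by omega) (by simpa using hne)]

end Prefix

section Rotation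
variable {α : Type*}

theorem rotR_eq_rotate {W : List α} {p : ℕ} (hp : p ≤ W.length) :
    rotR W p = W.rotate (W.length - p) := by
  induction p with
  | zero => simp [rotR]
  | succ p ih =>
    have hmod : W.length - p + (W.length - 1) = W.length - (p + 1) + W.length := by omega
    rw [rotR, ih (by omega), rotR1, List.length_rotate, List.rotate_rotate, hmod,
      ← List.rotate_mod, Nat.add_mod_right, List.rotate_mod]

theorem getElem?_rotR {W : List α} {p i : ℕ} (hp : p ≤ W.length) (hi : i < p) :
    (rotR W p)[i]? = W[W.length - p + i]? := by
  rw [rotR_eq_rotate hp, List.getElem?_rotate (by omega), Nat.mod_eq_of_lt (by omega)]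
  congr 1; omega

theorem take_rotR_cons {S : List α} (c : α) {p : ℕ} (hp : p ≤ S.length) :
    (rotR (c :: S) p).take p = (rotR S p).take p := by
  apply List.ext_getElem?
  intro i
  simp only [List.getElem?_take]
  split_ifs with hi
  · rw [getElem?_rotR (by simp; omega) hi, getElem?_rotR hp hi, List.length_cons,
      show S.length + 1 - p + i = (S.length - p + i) + 1 by omega, List.getElem?_cons_succ]
  · rfl

end Rotation

-- `EndsWith` counts with the derived `BEq` on `Sum`, which has no `LawfulBEq` instance upstream.
instance {α β : Type*} [BEq α] [LawfulBEq α] [BEq β] [LawfulBEq β] : LawfulBEq (α ⊕ β) := by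
  refine { rfl := ?_, eq_of_beq := ?_ }
  · rintro (a | b)
    · exact beq_self_eq_true a
    · exact beq_self_eq_true b
  · rintro (a | b) (a' | b') h <;>
      first | exact congrArg _ (eq_of_beq h) | exact Bool.noConfusion h

section PrevEnc
variable [DecidableEq σ] [DecidableEq π]

theorem prevEnc_take (X : List (σ ⊕ π)) (m : ℕ) : prevEnc (X.take m) = (prevEnc X).take m := by
  apply List.ext_getElem?
  intro k
  simp only [prevEnc, List.getElem?_take, List.getElem?_map, List.length_take]
  by_cases hk : k < min m X.length
  · have hf : ∀ b : π, (List.range k).filter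
          (fun j => decide ((if j < m then X[j]? else none) = some (Sum.inr b))) =
        (List.range k).filter (fun j => decide (X[j]? = some (Sum.inr b))) :=
      fun b => List.filter_congr fun j hj => by rw [if_pos (by simp at hj; omega)]
    simp only [List.getElem?_range hk, List.getElem?_range (show k < X.length by omega),
      if_pos (show k < m by omega), Option.map_some, hf]
  · rw [List.getElem?_eq_none (by simp; omega)]
    split_ifs
    · rw [List.getElem?_eq_none (by simp; omega)]; rfl
    · rfl

theorem getElem?_prevEnc_eq_inl_iff (X : List (σ ⊕ π)) (k : ℕ) (a : σ) :
    (prevEnc X)[k]? = some (Sum.inl a) ↔ X[k]? = some (Sum.inl a) := by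
  rcases lt_or_ge k X.length with hk | hk
  · simp only [prevEnc, List.getElem?_map, List.getElem?_range hk, Option.map_some]
    rcases X[k]? with _ | a' | b
    · simp
    · simp
    · simp only; split <;> simp
  · simp [prevEnc, hk]

theorem prevEnc_rotR_cons_take {S : List (σ ⊕ π)} (c : σ ⊕ π) {p m : ℕ} (hp : p ≤ S.length)
    (hm : m ≤ p) :
    (prevEnc (rotR (c :: S) p)).take m = (prevEnc (rotR S p)).take m := by
  have htake : ∀ X : List (σ ⊕ π), X.take m = (X.take p).take m := fun X => by
    rw [List.take_take, min_eq_left hm]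
  rw [← prevEnc_take, ← prevEnc_take, htake, take_rotR_cons c hp, ← htake]

end PrevEnc

section EndsWith
variable [DecidableEq σ] [DecidableEq π] {W S : List (σ ⊕ π)} {d : σ}

theorem EndsWith.cons (hS : EndsWith S d) {c : σ ⊕ π} (hc : c ≠ Sum.inl d) :
    EndsWith (c :: S) d := by
  obtain ⟨hlen, hlast, hcount⟩ := hS
  refine ⟨by simp, ?_, ?_⟩
  · rw [List.getLast?_cons, hlast]; rfl
  · simp [hcount, hc]

theorem EndsWith.getElem?_eq_inl_iff (hW : EndsWith W d) {j : ℕ} (hj : j < W.length) :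
    W[j]? = some (Sum.inl d) ↔ j = W.length - 1 := by
  obtain ⟨hlen, hlast, hcount⟩ := hW
  have hnot : Sum.inl d ∉ W.dropLast := by
    rw [← List.dropLast_append_getLast? _ hlast, List.count_append] at hcount
    simpa [List.count_eq_zero] using hcount
  constructor
  · intro hjd
    by_contra hne
    exact hnot <| List.mem_iff_getElem?.mpr
      ⟨j, by rw [List.getElem?_dropLast, if_pos (by omega), hjd]⟩
  · rintro rfl
    rwa [List.getLast?_eq_getElem?] at hlast

theorem EndsWith.getElem?_rotR_eq_inl_iff (hW : EndsWith W d) {p i : ℕ} (hp : p ≤ W.length)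
    (hi : i < p) : (rotR W p)[i]? = some (Sum.inl d) ↔ i = p - 1 := by
  rw [getElem?_rotR hp hi, hW.getElem?_eq_inl_iff (by omega)]
  omega

theorem EndsWith.exists_prevEnc_rotR_ne (hW : EndsWith W d) {p q : ℕ} (hp : 1 ≤ p) (hq : 1 ≤ q)
    (hpq : p ≠ q) (hpW : p ≤ W.length) (hqW : q ≤ W.length) :
    ∃ k < min p q, (prevEnc (rotR W p))[k]? ≠ (prevEnc (rotR W q))[k]? := by
  wlog hlt : p < q generalizing p q
  · obtain ⟨k, hk, hne⟩ := this hq hp hpq.symm hqW hpW (by omega)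
    exact ⟨k, by omega, hne.symm⟩
  refine ⟨p - 1, by omega, fun h => ?_⟩
  have hdollar : (prevEnc (rotR W p))[p - 1]? = some (Sum.inl d) := by
    rw [getElem?_prevEnc_eq_inl_iff, hW.getElem?_rotR_eq_inl_iff hpW (by omega)]
  rw [h, getElem?_prevEnc_eq_inl_iff, hW.getElem?_rotR_eq_inl_iff hqW (by omega)] at hdollar
  omega

end EndsWith

section Cons
variable [DecidableEq σ] [DecidableEq π] {S : List (σ ⊕ π)} {d : σ} {c : σ ⊕ π}

theorem lex_prevEnc_rotR_cons_iff [LT σ] (hS : EndsWith S d) (hc : c ≠ Sum.inl d) {p q : ℕ}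
    (hp : 1 ≤ p) (hq : 1 ≤ q) (hpq : p ≠ q) (hpS : p ≤ S.length) (hqS : q ≤ S.length) :
    List.Lex pvlt (prevEnc (rotR (c :: S) p)) (prevEnc (rotR (c :: S) q)) ↔
      List.Lex pvlt (prevEnc (rotR S p)) (prevEnc (rotR S q)) := by
  obtain ⟨k, hk, hT⟩ :=
    (hS.cons hc).exists_prevEnc_rotR_ne hp hq hpq (by simp; omega) (by simp; omega)
  obtain ⟨k', hk', hS'⟩ := hS.exists_prevEnc_rotR_ne hp hq hpq hpS hqS
  rw [lex_iff_lex_take hk hT, lex_iff_lex_take hk' hS', prevEnc_rotR_cons_take c hpS (by omega),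
    prevEnc_rotR_cons_take c hqS (by omega)]

theorem lcpInf_prevEnc_rotR_cons (hS : EndsWith S d) (hc : c ≠ Sum.inl d) {p q : ℕ}
    (hp : 1 ≤ p) (hq : 1 ≤ q) (hpq : p ≠ q) (hpS : p ≤ S.length) (hqS : q ≤ S.length) :
    lcpInf (prevEnc (rotR (c :: S) p)) (prevEnc (rotR (c :: S) q)) =
      lcpInf (prevEnc (rotR S p)) (prevEnc (rotR S q)) := by
  obtain ⟨k, hk, hT⟩ :=
    (hS.cons hc).exists_prevEnc_rotR_ne hp hq hpq (by simp; omega) (by simp; omega)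
  obtain ⟨k', hk', hS'⟩ := hS.exists_prevEnc_rotR_ne hp hq hpq hpS hqS
  rw [lcpInf, lcpInf, lcp_eq_lcp_take hk hT, lcp_eq_lcp_take hk' hS',
    prevEnc_rotR_cons_take c hpS (by omega), prevEnc_rotR_cons_take c hqS (by omega)]

end Cons

instance [Preorder σ] : Std.Asymm (pvlt (σ := σ)) where
  asymm
    | Sum.inl a, Sum.inl b, h => lt_asymm (show a < b from h)
    | Sum.inl _, Sum.inr _, _ => fun h => h
    | Sum.inr _, Sum.inl _, h => h.elim
    | Sum.inr x, Sum.inr y, h => lt_asymm (show x < y from h)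

section RotationArray
variable [LinearOrder σ] [DecidableEq π]

theorem IsRA.lt_of_lex {T : List (σ ⊕ π)} {RA : Fin T.length ≃ Fin T.length} (hRA : IsRA T RA)
    {i j : Fin T.length} (hlex : List.Lex pvlt (prevEnc (rotR T ((RA i).val + 1)))
      (prevEnc (rotR T ((RA j).val + 1)))) : i < j := by
  rcases lt_trichotomy i j with hij | rfl | hij
  · exact hij
  · exact absurd hlex (irrefl_of _ _)
  · exact absurd (hRA j i hij) (asymm hlex)

theorem IsRA.cons_succAbove {d : σ} {S : List (σ ⊕ π)} (hS : EndsWith S d) {c : σ ⊕ π}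
    (hc : c ≠ Sum.inl d) {RAS : Fin S.length ≃ Fin S.length} (hRAS : IsRA S RAS)
    {RAT : Fin (S.length + 1) ≃ Fin (S.length + 1)} (hRAT : IsRA (c :: S) RAT)
    {kT : Fin (S.length + 1)} (hkT : RAT kT = Fin.last _) (t : Fin S.length) :
    RAT (kT.succAbove t) = (RAS t).castSucc := by
  set e : Fin S.length → Fin (S.length + 1) := fun t => RAT.symm (RAS t).castSucc
  have hmono : StrictMono e := fun t u htu => by
    apply hRAT.lt_of_lex
    simp only [e, Equiv.apply_symm_apply, Fin.val_castSucc]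
    have hne : (RAS t).val ≠ (RAS u).val := fun h => htu.ne (RAS.injective (Fin.ext h))
    rw [lex_prevEnc_rotR_cons_iff hS hc (by omega) (by omega) (by omega) (RAS t).isLt (RAS u).isLt]
    exact hRAS t u htu
  have hrange : Set.range e = {kT}ᶜ := by
    ext j
    constructor
    · rintro ⟨t, rfl⟩ (hkt : e t = kT)
      have := congrArg RAT hkt
      simp only [e, Equiv.apply_symm_apply, hkT] at this
      exact Fin.castSucc_ne_last _ this
    · intro (hj : j ≠ kT)
      obtain ⟨s, hs⟩ := Fin.exists_castSucc_eq.mpr (hkT ▸ RAT.injective.ne hj)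
      exact ⟨RAS.symm s, by simp [e, hs]⟩
  have he : e = kT.succAbove :=
    (hmono.range_inj (Fin.strictMono_succAbove kT)).mp (by rw [hrange, Fin.range_succAbove])
  rw [← he]
  simp [e]

end RotationArray

theorem LCPa_cons_eq [LinearOrder σ] [DecidableEq π] {d : σ} {S : List (σ ⊕ π)}
    (hS : EndsWith S d) {c : σ ⊕ π} (hc : c ≠ Sum.inl d) (RAS : Fin S.length ≃ Fin S.length)
    (RAT : Fin (c :: S).length ≃ Fin (c :: S).length) {i j : ℕ} (hi : 1 ≤ i)
    (hiT : i < (c :: S).length) (hj : 1 ≤ j) (hjS : j < S.length)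
    (hprev : RAT ⟨i - 1, by omega⟩ = (RAS ⟨j - 1, by omega⟩).castSucc)
    (hcur : RAT ⟨i, hiT⟩ = (RAS ⟨j, hjS⟩).castSucc) :
    LCPa (c :: S) RAT i = LCPa S RAS j := by
  have hne : (RAS ⟨j - 1, by omega⟩).val ≠ (RAS ⟨j, hjS⟩).val := fun h => by
    have := congrArg Fin.val (RAS.injective (Fin.ext h))
    simp at this
    omega
  rw [LCPa, LCPa, dif_pos ⟨hi, hiT⟩, dif_pos ⟨hj, hjS⟩, hprev, hcur]
  exact lcpInf_prevEnc_rotR_cons hS hc (by omega) (by omega) (by simpa using hne)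
    (RAS _).isLt (RAS _).isLt

-- `kT` is 0-based: `k_T = kT.val + 1`.
theorem LCPa_insert_general [LinearOrder σ] [DecidableEq π]
    (d : σ)
    (S : List (σ ⊕ π)) (hS : EndsWith S d)
    (c : σ ⊕ π) (hc : c ≠ Sum.inl d)
    (RAS : Fin S.length ≃ Fin S.length) (hRAS : IsRA S RAS)
    (RAT : Fin (c :: S).length ≃ Fin (c :: S).length) (hRAT : IsRA (c :: S) RAT)
    (kT : Fin (c :: S).length) (hkT : (RAT kT).val + 1 = S.length + 1) :
    ∀ i : ℕ, 1 ≤ i →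
      (i < kT.val → LCPa (c :: S) RAT i = LCPa S RAS i) ∧
      (kT.val + 1 < i → LCPa (c :: S) RAT i = LCPa S RAS (i - 1)) := by
  have hpos := IsRA.cons_succAbove hS hc hRAS hRAT (kT := kT) (Fin.ext (by simp; omega))
  have hkS : kT.val ≤ S.length := Nat.lt_succ_iff.mp kT.isLt
  have below (a : ℕ) (ha : a < kT.val) :
      RAT ⟨a, by omega⟩ = (RAS ⟨a, by omega⟩).castSucc := by
    rw [← hpos, Fin.succAbove_of_castSucc_lt kT ⟨a, by omega⟩ ha]; rfl
  have above (a : ℕ) (ha : kT.val < a) (haS : a ≤ S.length) :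
      RAT ⟨a, by omega⟩ = (RAS ⟨a - 1, by omega⟩).castSucc := by
    rw [← hpos, Fin.succAbove_of_le_castSucc _ _ (Fin.le_def.mpr (by simp; omega))]
    congr 1; ext; simp; omega
  intro i hi
  refine ⟨fun hik => LCPa_cons_eq hS hc RAS RAT hi (by simp; omega) hi (by omega)
    (below _ (by omega)) (below _ hik), fun hik => ?_⟩
  rcases Nat.lt_or_ge i (S.length + 1) with hiT | hiT
  · exact LCPa_cons_eq hS hc RAS RAT hi hiT (by omega) (by omega)
      (above _ (by omega) (by omega)) (above _ (by omega) (by omega))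
  · rw [LCPa, LCPa, dif_neg (by simp; omega), dif_neg (by omega)]

/-- Let `T = cS` with `c ∈ (Σ ∪ Π) ∖ {$}` and
`k_T = RA_T⁻¹[n+1]` (1-based; here `kT.val + 1 = k_T`).  Then
`LCP∞_T[i] = LCP∞_S[i]` for all `i < k_T - 1`, and `LCP∞_T[i] = LCP∞_S[i-1]`
for all `i > k_T`. -/
theorem LCPa_insert [LinearOrder σ] [DecidableEq π]
    (d : σ) (hd : ∀ a : σ, d ≤ a)
    (S : List (σ ⊕ π)) (hS : EndsWith S d)
    (c : σ ⊕ π) (hc : c ≠ Sum.inl d)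
    (RAS : Fin S.length ≃ Fin S.length) (hRAS : IsRA S RAS)
    (RAT : Fin (c :: S).length ≃ Fin (c :: S).length) (hRAT : IsRA (c :: S) RAT)
    (kT : Fin (c :: S).length) (hkT : (RAT kT).val + 1 = S.length + 1) :
    ∀ i : ℕ, 1 ≤ i →
      (i < kT.val → LCPa (c :: S) RAT i = LCPa S RAS i) ∧
      (kT.val + 1 < i → LCPa (c :: S) RAT i = LCPa S RAS (i - 1)) :=
  LCPa_insert_general d S hS c hc RAS hRAS RAT hRAT kT hkT
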